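/- Let n and b be natural numbers with n ≥ 1 and b ≥ 2. Then the genus of T_b(n), i.e., the cardinality of ℕ \ T_b(n), equals ((b³ + b² − b − 1)·b^(2n) + ((n−1)·(b² − 1) − 2)·b^n − 2b + 4)/2. -/

import Mathlib

/-!
Put `a = (b + 1) * b ^ n - 1` and `L t = ∑_{j ≥ 1} ⌊t / b ^ j⌋`. The `i`-th generator is
`a * b ^ i + (b - 1) * (1 + b + ⋯ + b ^ (i - 1))`, so the sum of the generators indexed by a
multiset `s` of exponents is `a * t + (b - 1) * d` with `t = ∑_{i ∈ s} b ^ i` and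
`d = ∑_{i ∈ s} (1 + ⋯ + b ^ (i - 1))`. For fixed `t` the attainable `d` are exactly `0, …, L t`:
the base-`b` digits of `t` attain `L t`, and splitting one `b ^ (i + 1)` into `b` copies of `b ^ i`
lowers `d` by one.

Since `a ≡ 1 [MOD b - 1]`, every `m` with `a * (m % (b - 1)) ≤ m` is uniquely `a * t + (b - 1) * e`
with `e < a`, and it is a gap exactly when `L t < e`; the other gaps are the `m` below
`a * (m % (b - 1))`. As `L` is monotone with `L (b ^ n * (b ^ 2 - 1)) = a - 1`, only
`t < b ^ n * (b ^ 2 - 1)` contribute, and summing `a - 1 - L t` over them gives the formula.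
-/

/-- The Thabit numerical semigroup base `b`: the additive submonoid of ℕ generated by
`{(b+1)·b^(n+i) − 1 : i ∈ ℕ}`. -/
def thabitSemigroup (b n : ℕ) : AddSubmonoid ℕ :=
  AddSubmonoid.closure {m : ℕ | ∃ i : ℕ, m = (b + 1) * b ^ (n + i) - 1}

open Finset

def repunit (b i : ℕ) : ℕ := ∑ j ∈ range i, b ^ j

def legendreSum (b t : ℕ) : ℕ := ∑ j ∈ range t, t / b ^ (j + 1)

section
variable {b : ℕ}

@[simp] lemma repunit_zero : repunit b 0 = 0 := rfl

lemma repunit_succ (i : ℕ) : repunit b (i + 1) = repunit b i + b ^ i :=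
  sum_range_succ _ _

lemma repunit_succ' (i : ℕ) : repunit b (i + 1) = b * repunit b i + 1 := by
  rw [repunit, sum_range_succ', repunit, mul_sum]
  simp [pow_succ, mul_comm]

lemma sub_one_mul_repunit_add_one (hb : 1 ≤ b) (i : ℕ) : (b - 1) * repunit b i + 1 = b ^ i := by
  induction i with
  | zero => simp
  | succ i ih =>
    rw [repunit_succ', pow_succ, ← ih]
    obtain ⟨c, rfl⟩ := Nat.exists_eq_add_of_le hb
    simp only [Nat.add_sub_cancel_left]
    ring

@[simp] lemma legendreSum_zero : legendreSum b 0 = 0 := rfl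

lemma legendreSum_eq_sum_range (hb : 1 < b) {t M : ℕ} (h : t ≤ M) :
    legendreSum b t = ∑ j ∈ range M, t / b ^ (j + 1) := by
  refine sum_subset (range_subset_range.2 h) fun j _ hj => Nat.div_eq_of_lt ?_
  calc t ≤ j := by simpa using hj
    _ < b ^ j := Nat.lt_pow_self hb
    _ ≤ b ^ (j + 1) := Nat.pow_le_pow_right (by omega) j.le_succ

lemma legendreSum_add_mul (hb : 1 < b) {c : ℕ} (hc : c < b) (t : ℕ) :
    legendreSum b (c + b * t) = t + legendreSum b t := by
  have hdiv : ∀ j, (c + b * t) / b ^ (j + 1) = t / b ^ j := fun j => by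
    rw [pow_succ', ← Nat.div_div_eq_div_mul, Nat.add_mul_div_left _ _ (by omega),
      Nat.div_eq_of_lt hc, zero_add]
  have ht : t ≤ c + b * t := by nlinarith
  rw [legendreSum_eq_sum_range hb (Nat.le_succ (c + b * t)), sum_range_succ', hdiv,
    legendreSum_eq_sum_range hb ht]
  simp only [hdiv, pow_zero, Nat.div_one]
  ring

lemma legendreSum_of_lt (hb : 1 < b) {c : ℕ} (hc : c < b) : legendreSum b c = 0 := by
  simpa using legendreSum_add_mul hb hc 0

lemma legendreSum_pow_mul (hb : 1 < b) (k v : ℕ) :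
    legendreSum b (b ^ k * v) = v * repunit b k + legendreSum b v := by
  induction k with
  | zero => simp
  | succ k ih =>
    have := legendreSum_add_mul hb (c := 0) (by omega) (b ^ k * v)
    rw [zero_add, ← mul_assoc, ← pow_succ'] at this
    rw [this, ih, repunit_succ]
    ring

lemma legendreSum_pow (hb : 1 < b) (k : ℕ) : legendreSum b (b ^ k) = repunit b k := by
  simpa [legendreSum_of_lt hb hb] using legendreSum_pow_mul hb k 1

lemma legendreSum_mono (hb : 1 < b) : Monotone (legendreSum b) := fun s t h => by
  rw [legendreSum_eq_sum_range hb h, legendreSum_eq_sum_range hb le_rfl]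
  exact sum_le_sum fun j _ => Nat.div_le_div_right h

lemma legendreSum_add_le (hb : 1 < b) (s t : ℕ) :
    legendreSum b s + legendreSum b t ≤ legendreSum b (s + t) := by
  rw [legendreSum_eq_sum_range hb (Nat.le_add_right s t),
    legendreSum_eq_sum_range hb (Nat.le_add_left t s),
    legendreSum_eq_sum_range hb le_rfl, ← sum_add_distrib]
  exact sum_le_sum fun j _ => Nat.div_add_div_le_add_div

lemma exists_multiset_legendreSum (hb : 1 < b) (t : ℕ) :
    ∃ s : Multiset ℕ, (s.map (b ^ ·)).sum = t ∧ (s.map (repunit b)).sum = legendreSum b t := by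
  refine Nat.strong_induction_on t fun t ih => ?_
  rcases Nat.eq_zero_or_pos t with rfl | ht
  · exact ⟨0, by simp, by simp⟩
  obtain ⟨s, hs, hs'⟩ := ih (t / b) (Nat.div_lt_self ht hb)
  refine ⟨Multiset.replicate (t % b) 0 + s.map (· + 1), ?_, ?_⟩
  · simp only [Multiset.map_add, Multiset.map_replicate, Multiset.sum_add, Multiset.sum_replicate,
      Multiset.map_map, Function.comp_def, pow_succ', Multiset.sum_map_mul_left, hs]
    simpa using Nat.mod_add_div t b
  · rw [← Nat.mod_add_div t b, legendreSum_add_mul hb (Nat.mod_lt t (by omega))]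
    simp only [Multiset.map_add, Multiset.map_replicate, Multiset.sum_add, Multiset.sum_replicate,
      Multiset.map_map, Function.comp_def, repunit_succ, Multiset.sum_map_add, hs, hs',
      repunit_zero, smul_zero, zero_add]
    ring

lemma exists_multiset_of_le_legendreSum (hb : 1 < b) {t d : ℕ} (hd : d ≤ legendreSum b t) :
    ∃ s : Multiset ℕ, (s.map (b ^ ·)).sum = t ∧ (s.map (repunit b)).sum = d := by
  obtain ⟨k, hk⟩ := Nat.exists_eq_add_of_le hd
  induction k generalizing d with
  | zero => simpa [hk] using exists_multiset_legendreSum hb t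
  | succ k ih =>
    obtain ⟨s, hs, hs'⟩ := ih (d := d + 1) (by omega) (by omega)
    obtain ⟨i, hi⟩ : ∃ i, i + 1 ∈ s := by
      by_contra! h
      have : (s.map (repunit b)).sum = 0 := Multiset.sum_eq_zero fun x hx => by
        obtain ⟨j, hj, rfl⟩ := Multiset.mem_map.1 hx
        obtain rfl : j = 0 := by cases j <;> simp_all
        rfl
      omega
    obtain ⟨s₀, rfl⟩ := Multiset.exists_cons_of_mem hi
    refine ⟨Multiset.replicate b i + s₀, ?_, ?_⟩
    · simp only [Multiset.map_add, Multiset.map_cons, Multiset.sum_cons, Multiset.map_replicate,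
        Multiset.sum_add, Multiset.sum_replicate, smul_eq_mul] at hs ⊢
      rw [← hs, pow_succ']
    · simp only [Multiset.map_add, Multiset.map_cons, Multiset.sum_cons, Multiset.map_replicate,
        Multiset.sum_add, Multiset.sum_replicate, smul_eq_mul, repunit_succ'] at hs' ⊢
      omega

lemma thabit_generator_eq (hb : 1 < b) (n i : ℕ) :
    (b + 1) * b ^ (n + i) - 1 = ((b + 1) * b ^ n - 1) * b ^ i + (b - 1) * repunit b i := by
  have h := sub_one_mul_repunit_add_one hb.le i
  have : 1 ≤ (b + 1) * b ^ n := Nat.one_le_iff_ne_zero.2 (by positivity)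
  zify [this, Nat.one_le_iff_ne_zero.2 (by positivity : (b + 1) * b ^ (n + i) ≠ 0), hb.le] at h ⊢
  rw [pow_add]
  linear_combination (-1 : ℤ) * h

lemma mem_thabitSemigroup_iff (hb : 1 < b) (n m : ℕ) :
    m ∈ thabitSemigroup b n ↔
      ∃ t d, d ≤ legendreSum b t ∧ m = ((b + 1) * b ^ n - 1) * t + (b - 1) * d := by
  constructor
  · intro hm
    induction hm using AddSubmonoid.closure_induction with
    | mem x hx =>
      obtain ⟨i, rfl⟩ := hx
      exact ⟨b ^ i, repunit b i, (legendreSum_pow hb i).ge, thabit_generator_eq hb n i⟩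
    | zero => exact ⟨0, 0, le_rfl, rfl⟩
    | add x y _ _ hx hy =>
      obtain ⟨t, d, hd, rfl⟩ := hx
      obtain ⟨t', d', hd', rfl⟩ := hy
      exact ⟨t + t', d + d', (add_le_add hd hd').trans (legendreSum_add_le hb t t'), by ring⟩
  · rintro ⟨t, d, hd, rfl⟩
    obtain ⟨s, rfl, rfl⟩ := exists_multiset_of_le_legendreSum hb hd
    have hsum : (s.map fun i => (b + 1) * b ^ (n + i) - 1).sum
        = ((b + 1) * b ^ n - 1) * (s.map (b ^ ·)).sum + (b - 1) * (s.map (repunit b)).sum := by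
      rw [Multiset.map_congr rfl fun i _ => thabit_generator_eq hb n i]
      simp only [Multiset.sum_map_add, Multiset.sum_map_mul_left]
    rw [← hsum]
    exact AddSubmonoid.multiset_sum_mem _ _ fun x hx => by
      obtain ⟨i, -, rfl⟩ := Multiset.mem_map.1 hx
      exact AddSubmonoid.subset_closure ⟨i, rfl⟩

end

section
variable {r q : ℕ}

lemma mul_add_one_mul_add_mul_mod (t e : ℕ) : ((r * q + 1) * t + r * e) % r = t % r := by
  rw [show (r * q + 1) * t + r * e = t + r * (q * t + e) by ring, Nat.add_mul_mod_self_left]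

lemma mul_mod_le_add_mul (t e : ℕ) :
    (r * q + 1) * (((r * q + 1) * t + r * e) % r) ≤ (r * q + 1) * t + r * e := by
  rw [mul_add_one_mul_add_mul_mod]
  exact (Nat.mul_le_mul_left _ (Nat.mod_le t r)).trans (Nat.le_add_right _ _)

lemma le_of_add_mul_eq_add_mul (hr : 0 < r) {t t' e e' : ℕ} (he : e < r * q + 1)
    (h : (r * q + 1) * t + r * e = (r * q + 1) * t' + r * e') : t' ≤ t := by
  by_contra! htt
  have hmod : t % r = t' % r := by
    rw [← mul_add_one_mul_add_mul_mod (q := q) t e, h, mul_add_one_mul_add_mul_mod]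
  have hdvd : r ∣ t' - t := (Nat.modEq_iff_dvd' htt.le).1 hmod
  have : r ≤ t' - t := Nat.le_of_dvd (by omega) hdvd
  have : (r * q + 1) * (t + r) ≤ (r * q + 1) * t' := Nat.mul_le_mul_left _ (by omega)
  nlinarith

lemma exists_add_mul_eq_of_mul_mod_le (hr : 0 < r) {m : ℕ} (hm : (r * q + 1) * (m % r) ≤ m) :
    ∃ t e, e < r * q + 1 ∧ m = (r * q + 1) * t + r * e := by
  have hdiv := Nat.div_add_mod m r
  obtain ⟨v, hv⟩ : ∃ v, m / r = q * (m % r) + v := by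
    refine Nat.exists_eq_add_of_le (Nat.le_of_mul_le_mul_left ?_ hr)
    linarith
  refine ⟨m % r + r * (v / (r * q + 1)), v % (r * q + 1), Nat.mod_lt _ (by omega), ?_⟩
  calc m = m % r + r * (q * (m % r) + ((r * q + 1) * (v / (r * q + 1)) + v % (r * q + 1))) := by
        rw [Nat.div_add_mod, ← hv]; linarith
    _ = _ := by ring

variable (f : ℕ → ℕ)

lemma exists_add_mul_eq_iff (hr : 0 < r) (hf : Monotone f) {t e : ℕ} (he : e < r * q + 1) :
    (∃ t' d, d ≤ f t' ∧ (r * q + 1) * t + r * e = (r * q + 1) * t' + r * d) ↔ e ≤ f t := by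
  refine ⟨fun ⟨t', d, hd, h⟩ => ?_, fun h => ⟨t, e, h, rfl⟩⟩
  have htt := le_of_add_mul_eq_add_mul hr he h
  have : (r * q + 1) * t' ≤ (r * q + 1) * t := Nat.mul_le_mul_left _ htt
  have hed : e ≤ d := Nat.le_of_mul_le_mul_left (by omega : r * e ≤ r * d) hr
  exact hed.trans (hd.trans (hf htt))

end

section
variable (r q : ℕ)

def smallGaps : Finset ℕ :=
  ((range r).sigma fun c => range (q * c)).image fun p => p.1 + r * p.2

def largeGaps (f : ℕ → ℕ) (T : ℕ) : Finset ℕ :=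
  ((range T).sigma fun t => Ioc (f t) (r * q)).image fun p => (r * q + 1) * p.1 + r * p.2

variable {r q}

lemma mem_smallGaps_iff (hr : 0 < r) {m : ℕ} : m ∈ smallGaps r q ↔ m < (r * q + 1) * (m % r) := by
  simp only [smallGaps, mem_image, mem_sigma, mem_range, Sigma.exists]
  constructor
  · rintro ⟨c, j, ⟨hc, hj⟩, rfl⟩
    rw [Nat.add_mul_mod_self_left, Nat.mod_eq_of_lt hc]
    nlinarith
  · intro hm
    refine ⟨m % r, m / r, ⟨Nat.mod_lt m hr, ?_⟩, Nat.mod_add_div m r⟩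
    have := Nat.mod_add_div m r
    exact Nat.lt_of_mul_lt_mul_left (a := r) (by nlinarith)

lemma card_smallGaps (hr : 0 < r) : (smallGaps r q).card = ∑ c ∈ range r, q * c := by
  rw [smallGaps, card_image_of_injOn, card_sigma]
  · simp
  rintro ⟨c, j⟩ hp ⟨c', j'⟩ hp' h
  simp only [coe_sigma, Set.mem_sigma_iff, coe_range, Set.mem_Iio] at hp hp'
  have h : c + r * j = c' + r * j' := h
  obtain rfl : c = c' := by
    simpa [Nat.mod_eq_of_lt hp.1, Nat.mod_eq_of_lt hp'.1] using congrArg (· % r) h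
  obtain rfl : j = j' := Nat.eq_of_mul_eq_mul_left hr (by omega)
  rfl

variable (f : ℕ → ℕ) {T : ℕ}

lemma mem_largeGaps_iff (hf : Monotone f) (hT : r * q ≤ f T) {m : ℕ} :
    m ∈ largeGaps r q f T ↔ ∃ t e, f t < e ∧ e ≤ r * q ∧ m = (r * q + 1) * t + r * e := by
  simp only [largeGaps, mem_image, mem_sigma, mem_range, mem_Ioc, Sigma.exists]
  constructor
  · rintro ⟨t, e, ⟨-, he⟩, rfl⟩
    exact ⟨t, e, he.1, he.2, rfl⟩
  · rintro ⟨t, e, hfe, he, rfl⟩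
    refine ⟨t, e, ⟨?_, hfe, he⟩, rfl⟩
    by_contra! hTt
    have := hf hTt
    omega

lemma card_largeGaps (hr : 0 < r) :
    (largeGaps r q f T).card = ∑ t ∈ range T, (r * q - f t) := by
  rw [largeGaps, card_image_of_injOn, card_sigma]
  · simp
  rintro ⟨t, e⟩ hp ⟨t', e'⟩ hp' h
  simp only [coe_sigma, Set.mem_sigma_iff, coe_range, Set.mem_Iio, coe_Ioc, Set.mem_Ioc] at hp hp'
  have h : (r * q + 1) * t + r * e = (r * q + 1) * t' + r * e' := h
  obtain rfl : t = t' := le_antisymm (le_of_add_mul_eq_add_mul hr (by omega) h.symm)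
    (le_of_add_mul_eq_add_mul hr (by omega) h)
  obtain rfl : e = e' := Nat.eq_of_mul_eq_mul_left hr (by omega)
  rfl

theorem ncard_setOf_not_exists_add_mul (hr : 0 < r) (hf : Monotone f) (hT : r * q ≤ f T) :
    {m | ¬∃ t d, d ≤ f t ∧ m = (r * q + 1) * t + r * d}.ncard
      = ∑ t ∈ range T, (r * q - f t) + ∑ c ∈ range r, q * c := by
  have hgaps : {m | ¬∃ t d, d ≤ f t ∧ m = (r * q + 1) * t + r * d}
      = ↑(largeGaps r q f T ∪ smallGaps r q) := by
    ext m
    simp only [Set.mem_ofPred_eq, coe_union, Set.mem_union, mem_coe, mem_largeGaps_iff f hf hT,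
      mem_smallGaps_iff hr]
    constructor
    · intro hm
      refine (lt_or_ge m ((r * q + 1) * (m % r))).elim Or.inr fun hle => Or.inl ?_
      obtain ⟨t, e, he, rfl⟩ := exists_add_mul_eq_of_mul_mod_le hr hle
      refine ⟨t, e, ?_, by omega, rfl⟩
      by_contra! hef
      exact hm ((exists_add_mul_eq_iff f hr hf he).2 hef)
    · rintro (⟨t, e, hfe, he, rfl⟩ | hm)
      · rw [exists_add_mul_eq_iff f hr hf (by omega)]
        omega
      · rintro ⟨t, d, -, rfl⟩
        exact absurd (mul_mod_le_add_mul t d) (not_le.2 hm)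
  have hdisj : Disjoint (largeGaps r q f T) (smallGaps r q) := by
    refine disjoint_left.2 fun m h1 h2 => ?_
    obtain ⟨t, e, -, -, rfl⟩ := (mem_largeGaps_iff f hf hT).1 h1
    exact absurd (mul_mod_le_add_mul t e) (not_le.2 ((mem_smallGaps_iff hr).1 h2))
  rw [hgaps, Set.ncard_coe_finset, card_union_of_disjoint hdisj, card_largeGaps f hr,
    card_smallGaps hr]

end

section
variable {b : ℕ}

lemma sum_range_mul_legendreSum (hb : 1 < b) (x : ℕ) :
    ∑ t ∈ range (b * x), legendreSum b t = b * ∑ t ∈ range x, (t + legendreSum b t) := by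
  induction x with
  | zero => simp
  | succ x ih =>
    rw [mul_add_one, sum_range_add, ih, sum_range_succ, mul_add]
    have hblock : ∀ c ∈ range b, legendreSum b (b * x + c) = x + legendreSum b x := fun c hc => by
      rw [add_comm, legendreSum_add_mul hb (mem_range.1 hc)]
    rw [sum_congr rfl hblock, sum_const, card_range, smul_eq_mul]

lemma two_mul_sum_range_pow_mul_legendreSum (hb : 1 < b) (k v : ℕ) :
    2 * ∑ t ∈ range (b ^ k * v), legendreSum b t + b ^ k * v * k
      = b ^ k * (v ^ 2 * repunit b k + 2 * ∑ t ∈ range v, legendreSum b t) := by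
  induction k with
  | zero => simp
  | succ k ih =>
    have hgauss : (∑ t ∈ range (b ^ k * v), t) * 2 + b ^ k * v = b ^ k * v * (b ^ k * v) := by
      rw [sum_range_id_mul_two, Nat.mul_sub_one, Nat.sub_add_cancel (Nat.le_mul_self _)]
    rw [pow_succ', mul_assoc, sum_range_mul_legendreSum hb, sum_add_distrib, repunit_succ]
    linear_combination b * ih + b * hgauss

lemma legendreSum_sq_sub_one (hb : 1 < b) : legendreSum b (b ^ 2 - 1) = b - 1 := by
  have hsq : b ^ 2 - 1 = b - 1 + b * (b - 1) := by
    obtain ⟨c, rfl⟩ := Nat.exists_eq_add_of_le hb.le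
    simp only [Nat.add_sub_cancel_left]
    ring_nf
    omega
  rw [hsq, legendreSum_add_mul hb (by omega), legendreSum_of_lt hb (by omega), add_zero]

lemma two_mul_sum_range_sq_sub_one_legendreSum (hb : 1 < b) :
    2 * ∑ t ∈ range (b ^ 2 - 1), legendreSum b t + 2 * (b - 1) = b ^ 2 * (b - 1) := by
  have hsum := sum_range_mul_legendreSum hb b
  have hsmall : ∑ t ∈ range b, (t + legendreSum b t) = ∑ t ∈ range b, t :=
    sum_congr rfl fun t ht => by rw [legendreSum_of_lt hb (mem_range.1 ht), add_zero]
  rw [← sq, ← Nat.sub_add_cancel (Nat.one_le_pow 2 b (by omega)), sum_range_succ,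
    legendreSum_sq_sub_one hb, hsmall] at hsum
  have hgauss := sum_range_id_mul_two b
  linear_combination 2 * hsum + b * hgauss

lemma add_one_mul_pow_sub_one_eq (hb : 1 ≤ b) (n : ℕ) :
    (b + 1) * b ^ n - 1 = (b - 1) * ((b + 1) * repunit b n + 1) + 1 := by
  rw [← sub_one_mul_repunit_add_one hb n]
  obtain ⟨c, rfl⟩ := Nat.exists_eq_add_of_le hb
  simp only [Nat.add_sub_cancel_left]
  have : (1 + c + 1) * (c * repunit (1 + c) n + 1)
      = c * ((1 + c + 1) * repunit (1 + c) n + 1) + 2 := by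
    ring
  omega

lemma legendreSum_pow_mul_sq_sub_one (hb : 1 < b) (n : ℕ) :
    legendreSum b (b ^ n * (b ^ 2 - 1)) = (b - 1) * ((b + 1) * repunit b n + 1) := by
  rw [legendreSum_pow_mul hb, legendreSum_sq_sub_one hb]
  obtain ⟨c, rfl⟩ := Nat.exists_eq_add_of_le hb.le
  have hsq : (1 + c) ^ 2 - 1 = c * (c + 2) := by ring_nf; omega
  rw [hsq, Nat.add_sub_cancel_left]
  ring

end

theorem thabit_genus_general (n b : ℕ) (hb : 2 ≤ b) :
    2 * (Set.ncard {m : ℕ | m ∉ thabitSemigroup b n} : ℤ)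
      = ((b : ℤ) ^ 3 + (b : ℤ) ^ 2 - (b : ℤ) - 1) * (b : ℤ) ^ (2 * n)
        + (((n : ℤ) - 1) * ((b : ℤ) ^ 2 - 1) - 2) * (b : ℤ) ^ n - 2 * (b : ℤ) + 4 := by
  set q := (b + 1) * repunit b n + 1
  set T := b ^ n * (b ^ 2 - 1)
  have hLT : legendreSum b T = (b - 1) * q := legendreSum_pow_mul_sq_sub_one hb n
  have hgaps := ncard_setOf_not_exists_add_mul (legendreSum b) (q := q) (T := T) (by omega)
    (legendreSum_mono hb) hLT.ge
  rw [← add_one_mul_pow_sub_one_eq (by omega : 1 ≤ b)] at hgaps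
  simp_rw [← mem_thabitSemigroup_iff hb] at hgaps
  have hsplit : ∑ t ∈ range T, ((b - 1) * q - legendreSum b t) + ∑ t ∈ range T, legendreSum b t
      = T * ((b - 1) * q) := by
    rw [← sum_add_distrib, sum_congr rfl fun t ht => Nat.sub_add_cancel
      (hLT ▸ legendreSum_mono hb (mem_range.1 ht).le), sum_const, card_range, smul_eq_mul]
  have hsmall : (∑ c ∈ range (b - 1), q * c) * 2 = q * ((b - 1) * (b - 1 - 1)) := by
    rw [← mul_sum, mul_assoc, sum_range_id_mul_two]
  have hsum := two_mul_sum_range_pow_mul_legendreSum hb n (b ^ 2 - 1)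
  have hsum' := two_mul_sum_range_sq_sub_one_legendreSum hb
  have hrep := sub_one_mul_repunit_add_one (by omega : 1 ≤ b) n
  rw [hgaps, pow_mul']
  simp only [T, q] at hsplit hsmall ⊢
  zify [(by omega : 1 ≤ b), (by omega : 1 ≤ b - 1), Nat.one_le_pow 2 b (by omega)] at *
  linear_combination 2 * hsplit - hsum + hsmall - (b : ℤ) ^ n * hsum'
    + ((b : ℤ) ^ n * ((b : ℤ) ^ 2 - 1) * ((b : ℤ) + 1) + ((b : ℤ) + 1) * ((b : ℤ) - 2)) * hrep

theorem thabit_genus (n b : ℕ) (hn : 1 ≤ n) (hb : 2 ≤ b) :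
    2 * (Set.ncard {m : ℕ | m ∉ thabitSemigroup b n} : ℤ)
      = ((b : ℤ) ^ 3 + (b : ℤ) ^ 2 - (b : ℤ) - 1) * (b : ℤ) ^ (2 * n)
        + (((n : ℤ) - 1) * ((b : ℤ) ^ 2 - 1) - 2) * (b : ℤ) ^ n - 2 * (b : ℤ) + 4 :=
  thabit_genus_general n b hb
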